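/- arXiv:2305.18348 — 2 statements merged into one kernel-verified Lean document; each statement's English description precedes it below -/
import Mathlib

section
/- Let c, d > 0 be real numbers such that 0 < c - d < ln(c/d). Then for all λ ∈ [0,1], ln((1-λ) + λc) - ln((1-λ) + λd) ≤ λ(ln c - ln d). -/
/-!
Put `L = log (c / d)` and `φ λ = λ L - log (1 - λ + λ c) + log (1 - λ + λ d)`, so that `φ 0 = φ 1 = 0`.
The derivative `φ'` has the sign of a quadratic `q` with `q 0 = L - (c - d) > 0` and
`q 1 = c d L - (c - d)`. The logarithmic-geometric mean inequality `L < (c - d) / √(c d)` together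
with `c - d < L` forces `√(c d) < 1`, hence `c d L < √(c d) L < c - d` and `q 1 < 0`. So `q`, and with
it `φ'`, changes sign only once on `[0, 1]`, from `+` to `-`: `φ` rises, then falls, and stays `≥ 0`.
-/

open Real Set

lemma min_le_of_hasDerivAt_sign_change {f f' : ℝ → ℝ} {a b : ℝ}
    (hcont : ContinuousOn f (Icc a b)) (hf : ∀ x ∈ Ioo a b, HasDerivAt f (f' x) x)
    (hsign : ∀ x ∈ Ioo a b, ∀ y ∈ Ioo a b, x ≤ y → 0 ≤ f' y → 0 ≤ f' x)
    {l : ℝ} (hl : l ∈ Icc a b) : min (f a) (f b) ≤ f l := by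
  by_cases hleft : ∀ x ∈ Ioo a l, 0 ≤ f' x
  · have hmono : MonotoneOn f (Icc a l) :=
      monotoneOn_of_hasDerivWithinAt_nonneg (convex_Icc a l)
        (hcont.mono (Icc_subset_Icc le_rfl hl.2))
        (fun x hx ↦ by
          rw [interior_Icc] at hx
          exact (hf x ⟨hx.1, hx.2.trans_le hl.2⟩).hasDerivWithinAt)
        (fun x hx ↦ hleft x (by rwa [interior_Icc] at hx))
    exact min_le_of_left_le (hmono (left_mem_Icc.2 hl.1) (right_mem_Icc.2 hl.1) hl.1)
  · push Not at hleft
    obtain ⟨x₀, hx₀, hfx₀⟩ := hleft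
    have hanti : AntitoneOn f (Icc l b) :=
      antitoneOn_of_hasDerivWithinAt_nonpos (convex_Icc l b)
        (hcont.mono (Icc_subset_Icc hl.1 le_rfl))
        (fun x hx ↦ by
          rw [interior_Icc] at hx
          exact (hf x ⟨hl.1.trans_lt hx.1, hx.2⟩).hasDerivWithinAt)
        (fun x hx ↦ by
          rw [interior_Icc] at hx
          by_contra! hfx
          exact hfx₀.not_ge (hsign x₀ ⟨hx₀.1, hx₀.2.trans_le hl.2⟩
            x ⟨hl.1.trans_lt hx.1, hx.2⟩ (hx₀.2.trans hx.1).le hfx.le))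
    exact min_le_of_right_le (hanti (left_mem_Icc.2 hl.2) (right_mem_Icc.2 hl.2) hl.2)

/-- A quadratic that is nonnegative at `0` and negative at `1` changes sign only once on `[0, 1]`. -/
lemma quadratic_nonneg_of_le_of_nonneg {e f g x y : ℝ} (hg : 0 ≤ g) (h1 : e + f + g < 0)
    (hx : 0 ≤ x) (hxy : x ≤ y) (hy : y ≤ 1) (hqy : 0 ≤ e * y ^ 2 + f * y + g) :
    0 ≤ e * x ^ 2 + f * x + g := by
  rcases le_or_gt e 0 with he | he
  · -- concavity: `y q(x) ≥ (y - x) q(0) + x q(y)`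
    have hconc : y * (e * x ^ 2 + f * x + g) =
        (y - x) * g + x * (e * y ^ 2 + f * y + g) - e * x * (y - x) * y := by ring
    rcases hx.eq_or_lt with rfl | hx
    · simpa using hg
    · have : 0 ≤ y * (e * x ^ 2 + f * x + g) := by
        rw [hconc]
        have := mul_nonneg (mul_nonneg (mul_nonneg (neg_nonneg.2 he) hx.le) (sub_nonneg.2 hxy))
          (hx.le.trans hxy)
        linarith [mul_nonneg (sub_nonneg.2 hxy) hg, mul_nonneg hx.le hqy]
      exact nonneg_of_mul_nonneg_right (by linarith) (hx.trans_le hxy)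
  · -- convexity: `(1 - x) q(y) ≤ (1 - y) q(x) + (y - x) q(1)`
    have hconv : (1 - x) * (e * y ^ 2 + f * y + g) =
        (1 - y) * (e * x ^ 2 + f * x + g) + (y - x) * (e + f + g) - e * (y - x) * (1 - y) * (1 - x) := by
      ring
    by_contra! hqx
    rcases hy.eq_or_lt with rfl | hy
    · linarith
    · have := mul_nonneg (mul_nonneg (mul_nonneg he.le (sub_nonneg.2 hxy)) (sub_nonneg.2 hy.le))
        (by linarith : (0:ℝ) ≤ 1 - x)
      linarith [mul_pos (sub_pos.2 hy) (neg_pos.2 hqx), mul_nonneg (by linarith : (0:ℝ) ≤ 1 - x) hqy,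
        mul_nonpos_of_nonneg_of_nonpos (sub_nonneg.2 hxy) h1.le]

lemma two_mul_log_lt_sub_inv {u : ℝ} (hu : 1 < u) : 2 * log u < u - u⁻¹ := by
  have := self_lt_sinh_iff.2 (log_pos hu)
  rw [sinh_log (by linarith)] at this
  linarith

lemma log_div_lt_sub_div_sqrt_mul {c d : ℝ} (hd : 0 < d) (hdc : d < c) :
    log (c / d) < (c - d) / (√c * √d) := by
  have hc : 0 < c := hd.trans hdc
  have hsd : 0 < √d := sqrt_pos.2 hd
  have hsc : 0 < √c := sqrt_pos.2 hc
  have hu : 1 < √c / √d := (one_lt_div hsd).2 (sqrt_lt_sqrt hd.le hdc)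
  calc log (c / d) = 2 * log (√c / √d) := by
        rw [log_div hsc.ne' hsd.ne', log_sqrt hc.le, log_sqrt hd.le, log_div hc.ne' hd.ne']; ring
    _ < √c / √d - (√c / √d)⁻¹ := two_mul_log_lt_sub_inv hu
    _ = (c - d) / (√c * √d) := by
        field_simp
        rw [sq_sqrt hc.le, sq_sqrt hd.le]

lemma mul_mul_log_div_lt_sub {c d : ℝ} (hd : 0 < d) (hdc : d < c) (h : c - d < log (c / d)) :
    c * d * log (c / d) < c - d := by
  have hc : 0 < c := hd.trans hdc
  set s := √c * √d with hs
  have hs0 : 0 < s := mul_pos (sqrt_pos.2 hc) (sqrt_pos.2 hd)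
  have hs2 : s ^ 2 = c * d := by rw [hs, mul_pow, sq_sqrt hc.le, sq_sqrt hd.le]
  have hlt : s * log (c / d) < c - d := by
    have := log_div_lt_sub_div_sqrt_mul hd hdc
    rwa [← hs, lt_div_iff₀ hs0, mul_comm] at this
  have hL : 0 < log (c / d) := by linarith
  have hs1 : s < 1 := lt_of_mul_lt_mul_right (by linarith : s * log (c / d) < 1 * log (c / d)) hL.le
  calc c * d * log (c / d) = s ^ 2 * log (c / d) := by rw [hs2]
    _ < s * log (c / d) := by gcongr; nlinarith
    _ < c - d := hlt

lemma one_sub_add_mul_pos {a x : ℝ} (ha : 0 < a) (hx : x ∈ Icc (0 : ℝ) 1) : 0 < 1 - x + x * a := by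
  rcases hx.2.lt_or_eq with hx1 | rfl
  · linarith [mul_nonneg hx.1 ha.le]
  · simpa using ha

lemma hasDerivAt_log_one_sub_add_mul {a x : ℝ} (h : 1 - x + x * a ≠ 0) :
    HasDerivAt (fun x ↦ log (1 - x + x * a)) ((a - 1) / (1 - x + x * a)) x := by
  have hlin : HasDerivAt (fun x ↦ 1 - x + x * a) (-1 + 1 * a) x :=
    ((hasDerivAt_id' x).const_sub 1).fun_add ((hasDerivAt_id' x).mul_const a)
  exact (hlin.log h).congr_deriv (by ring)

lemma hasDerivAt_mul_sub_log_add_log {c d L x : ℝ} (hc : 1 - x + x * c ≠ 0) (hd : 1 - x + x * d ≠ 0) :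
    HasDerivAt (fun x ↦ x * L - log (1 - x + x * c) + log (1 - x + x * d))
      ((L * (c - 1) * (d - 1) * x ^ 2 + L * (c + d - 2) * x + (L - (c - d))) /
        ((1 - x + x * c) * (1 - x + x * d))) x := by
  refine ((((hasDerivAt_id' x).mul_const L).fun_sub (hasDerivAt_log_one_sub_add_mul hc)).fun_add
    (hasDerivAt_log_one_sub_add_mul hd)).congr_deriv ?_
  set A := 1 - x + x * c
  set B := 1 - x + x * d
  field_simp
  ring

theorem stmt_1 (c d : ℝ) (hc : 0 < c) (hd : 0 < d) (h1 : 0 < c - d)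
    (h2 : c - d < Real.log (c/d)) (l : ℝ) (hl : l ∈ Set.Icc (0:ℝ) 1) :
    Real.log ((1-l) + l*c) - Real.log ((1-l) + l*d) ≤ l * (Real.log c - Real.log d) := by
  set L := log c - log d
  have hLcd : L = log (c / d) := (log_div hc.ne' hd.ne').symm
  have hkey : c * d * L < c - d := hLcd ▸ mul_mul_log_div_lt_sub hd (by linarith) h2
  set q : ℝ → ℝ := fun x ↦ L * (c - 1) * (d - 1) * x ^ 2 + L * (c + d - 2) * x + (L - (c - d))
  have hpos : ∀ x ∈ Icc (0 : ℝ) 1, 0 < (1 - x + x * c) * (1 - x + x * d) := fun x hx ↦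
    mul_pos (one_sub_add_mul_pos hc hx) (one_sub_add_mul_pos hd hx)
  have hderiv : ∀ x ∈ Icc (0 : ℝ) 1, HasDerivAt
      (fun x ↦ x * L - log (1 - x + x * c) + log (1 - x + x * d))
      (q x / ((1 - x + x * c) * (1 - x + x * d))) x := fun x hx ↦
    hasDerivAt_mul_sub_log_add_log (one_sub_add_mul_pos hc hx).ne' (one_sub_add_mul_pos hd hx).ne'
  have hsign : ∀ x ∈ Ioo (0 : ℝ) 1, ∀ y ∈ Ioo (0 : ℝ) 1, x ≤ y →
      0 ≤ q y / ((1 - y + y * c) * (1 - y + y * d)) →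
      0 ≤ q x / ((1 - x + x * c) * (1 - x + x * d)) := by
    intro x hx y hy hxy hqy
    rw [le_div_iff₀ (hpos y (Ioo_subset_Icc_self hy)), zero_mul] at hqy
    refine div_nonneg (quadratic_nonneg_of_le_of_nonneg (by linarith) ?_ hx.1.le hxy hy.2.le hqy)
      (hpos x (Ioo_subset_Icc_self hx)).le
    linear_combination hkey
  have := min_le_of_hasDerivAt_sign_change
    (fun x hx ↦ (hderiv x hx).continuousAt.continuousWithinAt)
    (fun x hx ↦ hderiv x (Ioo_subset_Icc_self hx)) hsign hl
  have hf1 : L - log c + log d = 0 := by ring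
  simp only [zero_mul, sub_zero, add_zero, log_one, sub_self, one_mul, zero_add, hf1,
    min_self] at this
  linarith
end

section
/- For t₁, t₂, t₃ ∈ (-1,1): t₁·arctanh(t₁) + t₂·arctanh(t₂) + t₃·arctanh(t₃) = (1/4)(g(t₁,t₂,t₃) + g(t₁,-t₂,t₃) + g(t₁,t₂,-t₃) + g(t₁,-t₂,-t₃)), where g(a,b,c) := (a+b+c+abc)(arctanh(a)+arctanh(b)+arctanh(c)). -/
noncomputable def arctanh (x : ℝ) : ℝ := (1/2) * Real.log ((1+x)/(1-x))

noncomputable def g (a b c : ℝ) : ℝ :=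
  (a + b + c + a*b*c) * (arctanh a + arctanh b + arctanh c)

lemma arctanh_neg (x : ℝ) : arctanh (-x) = -arctanh x := by
  unfold arctanh
  rw [show (1 + -x) / (1 - -x) = ((1+x)/(1-x))⁻¹ by rw [inv_div]; ring_nf,
    Real.log_inv]
  ring

theorem stmt_7 (t1 t2 t3 : ℝ) (h1 : t1 ∈ Set.Ioo (-1:ℝ) 1) (h2 : t2 ∈ Set.Ioo (-1:ℝ) 1)
    (h3 : t3 ∈ Set.Ioo (-1:ℝ) 1) :
    t1 * arctanh t1 + t2 * arctanh t2 + t3 * arctanh t3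
      = (1/4) * (g t1 t2 t3 + g t1 (-t2) t3 + g t1 t2 (-t3) + g t1 (-t2) (-t3)) := by
  unfold g
  rw [arctanh_neg, arctanh_neg]
  ring
end
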